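/- arXiv:1611.01473 — 2 statements merged into one kernel-verified Lean document; each statement's English description precedes it below -/
import Mathlib

section
/- For the pure state ρ = |ψ⟩⟨ψ| with Schmidt decomposition |ψ⟩ = \sqrt{p}|a_1 b_1⟩ + \sqrt{1-p}|a_2 b_2⟩ on ℂ² ⊗ H_B, the local projective measurement in the Schmidt basis minimizes the entropy of the dephased state over all local rank-1 projective measurements on the first factor: for any orthonormal basis {|ã_1⟩, |ã_2⟩} of ℂ², the dephased state Π̃(ρ) satisfies S(Π̃(ρ)) ≥ h(p). -/
open scoped Kronecker ComplexOrder Matrix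

/-- Matrix logarithm of a Hermitian matrix via the spectral theorem
(junk value `0` on non-Hermitian matrices). -/
noncomputable def matLog {n : Type*} [Fintype n] [DecidableEq n]
    (A : Matrix n n ℂ) : Matrix n n ℂ :=
  if hA : A.IsHermitian then
    (hA.eigenvectorUnitary : Matrix n n ℂ) *
      Matrix.diagonal (fun i => (Real.log (hA.eigenvalues i) : ℂ)) *
      star (hA.eigenvectorUnitary : Matrix n n ℂ)
  else 0

/-- Von Neumann entropy `S(ρ) = -Tr(ρ log ρ)`. -/
noncomputable def vnEntropy {n : Type*} [Fintype n] [DecidableEq n]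
    (ρ : Matrix n n ℂ) : ℝ :=
  -((ρ * matLog ρ).trace.re)

/-- Quantum relative entropy `S(ρ‖σ) = Tr(ρ log ρ) - Tr(ρ log σ)`. -/
noncomputable def relEntropy {n : Type*} [Fintype n] [DecidableEq n]
    (ρ σ : Matrix n n ℂ) : ℝ :=
  ((ρ * matLog ρ).trace - (ρ * matLog σ).trace).re

/-- A density matrix: positive semidefinite with unit trace. -/
def IsDensity {n : Type*} [Fintype n] [DecidableEq n] (ρ : Matrix n n ℂ) : Prop :=
  ρ.PosSemidef ∧ ρ.trace = 1

/-- Pinching (dephasing) map by a family of projections. -/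
noncomputable def pinch {n ι : Type*} [Fintype n] [DecidableEq n] [Fintype ι]
    (P : ι → Matrix n n ℂ) (ρ : Matrix n n ℂ) : Matrix n n ℂ :=
  ∑ m, P m * ρ * P m

/-- A complete family of mutually orthogonal projections. -/
def IsProjFamily {n ι : Type*} [Fintype n] [DecidableEq n] [Fintype ι] [DecidableEq ι]
    (P : ι → Matrix n n ℂ) : Prop :=
  (∀ m, (P m).IsHermitian) ∧ (∀ m m', P m * P m' = if m = m' then P m else 0) ∧
    (∑ m, P m = 1)

/-- Outer product `|v⟩⟨v|`. -/
def outer {n : Type*} (v : n → ℂ) : Matrix n n ℂ :=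
  Matrix.vecMulVec v (star v)

/-- Binary Shannon entropy. -/
noncomputable def binEnt (p : ℝ) : ℝ :=
  -(p * Real.log p + (1 - p) * Real.log (1 - p))

/-- Shannon entropy of a finitely supported probability vector. -/
noncomputable def shannon {α : Type*} [Fintype α] (p : α → ℝ) : ℝ :=
  -∑ a, p a * Real.log (p a)

/-- Partial trace over the second tensor factor. -/
noncomputable def ptraceB {a b : Type*} [Fintype b]
    (ρ : Matrix (a × b) (a × b) ℂ) : Matrix a a ℂ :=
  Matrix.of fun i j => ∑ k, ρ (i, k) (j, k)

/-- Partial trace over the first tensor factor. -/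
noncomputable def ptraceA {a b : Type*} [Fintype a]
    (ρ : Matrix (a × b) (a × b) ℂ) : Matrix b b ℂ :=
  Matrix.of fun i j => ∑ k, ρ (k, i) (k, j)

open Matrix Polynomial Real

/-!
Dephasing with the projections `|tᵢ⟩⟨tᵢ| ⊗ 1` sends `|ψ⟩⟨ψ|` to `|u₁⟩⟨u₁| + |u₂⟩⟨u₂|`, where
`uᵢ = tᵢ ⊗ (⟨tᵢ| ⊗ 1)ψ` are orthogonal with squared norms `q` and `1 - q`, and
`q = s p + (1 - s)(1 - p)` with `s = |⟨t₁|a₁⟩|²`. Writing the state as `U Uᴴ` for the matrix `U`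
with columns `uᵢ`, its nonzero spectrum is that of the diagonal Gram matrix `Uᴴ U`, so its entropy
is `h(q)`; since `h` is concave and symmetric about `1/2`, `h(q) ≥ s h(p) + (1 - s) h(1 - p) = h(p)`.
-/

theorem sum_map_roots_X_pow_mul {p : ℂ[X]} (hp : p ≠ 0) (k : ℕ) {f : ℂ → ℝ} (hf : f 0 = 0) :
    ((X ^ k * p).roots.map f).sum = (p.roots.map f).sum := by
  rw [roots_mul (mul_ne_zero (pow_ne_zero k X_ne_zero) hp), roots_X_pow]
  simp [Multiset.map_nsmul, Multiset.sum_nsmul, hf]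

theorem sum_outer_eq_mul_conjTranspose {n ι : Type*} [Fintype ι] (u : ι → n → ℂ) :
    ∑ i, outer (u i) = of (fun x i => u i x) * (of fun x i => u i x)ᴴ := by
  ext x y
  simp [outer, vecMulVec_apply, mul_apply, Matrix.sum_apply]

theorem mul_outer_mul_conjTranspose {m n : Type*} [Fintype n] (A : Matrix m n ℂ) (v : n → ℂ) :
    A * outer v * Aᴴ = outer (A *ᵥ v) := by
  rw [outer, outer, mul_vecMulVec, vecMulVec_mul, star_mulVec]

section Spectral

variable {n : Type*} [Fintype n] [DecidableEq n]

theorem vnEntropy_eq_sum_negMulLog_eigenvalues {A : Matrix n n ℂ} (hA : A.IsHermitian) :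
    vnEntropy A = ∑ i, negMulLog (hA.eigenvalues i) := by
  set U : Matrix n n ℂ := (hA.eigenvectorUnitary : Matrix n n ℂ)
  have hdiag : star U * A * U = diagonal (fun i => (hA.eigenvalues i : ℂ)) := by
    simpa [Function.comp_def] using hA.conjStarAlgAut_star_eigenvectorUnitary
  have hcycle : (A * (U * diagonal (fun i => (log (hA.eigenvalues i) : ℂ)) * star U)).trace
      = (star U * A * U * diagonal (fun i => (log (hA.eigenvalues i) : ℂ))).trace := by
    rw [← Matrix.mul_assoc, ← Matrix.mul_assoc, trace_mul_comm, ← Matrix.mul_assoc,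
      ← Matrix.mul_assoc]
  rw [vnEntropy, matLog, dif_pos hA, hcycle, hdiag, diagonal_mul_diagonal, trace_diagonal]
  simp [negMulLog, Complex.re_sum, ← Complex.ofReal_mul]

theorem vnEntropy_eq_sum_negMulLog_roots_charpoly {A : Matrix n n ℂ} (hA : A.IsHermitian) :
    vnEntropy A = (A.charpoly.roots.map fun z => negMulLog z.re).sum := by
  rw [vnEntropy_eq_sum_negMulLog_eigenvalues hA, hA.roots_charpoly_eq_eigenvalues,
    Multiset.map_map]
  rfl

theorem vnEntropy_eq_of_X_pow_mul_charpoly_eq {m : Type*} [Fintype m] [DecidableEq m]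
    {A : Matrix n n ℂ} {B : Matrix m m ℂ} (hA : A.IsHermitian) (hB : B.IsHermitian) {a b : ℕ}
    (h : X ^ a * A.charpoly = X ^ b * B.charpoly) :
    vnEntropy A = vnEntropy B := by
  rw [vnEntropy_eq_sum_negMulLog_roots_charpoly hA, vnEntropy_eq_sum_negMulLog_roots_charpoly hB,
    ← sum_map_roots_X_pow_mul A.charpoly_monic.ne_zero a (by simp), h,
    sum_map_roots_X_pow_mul B.charpoly_monic.ne_zero b (by simp)]

theorem vnEntropy_mul_conjTranspose_comm {k : Type*} [Fintype k] [DecidableEq k]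
    (U : Matrix n k ℂ) : vnEntropy (U * Uᴴ) = vnEntropy (Uᴴ * U) :=
  vnEntropy_eq_of_X_pow_mul_charpoly_eq (isHermitian_mul_conjTranspose_self U)
    (isHermitian_conjTranspose_mul_self U) (charpoly_mul_comm' U Uᴴ)

theorem vnEntropy_diagonal_ofReal (d : n → ℝ) :
    vnEntropy (diagonal fun i => (d i : ℂ)) = ∑ i, negMulLog (d i) := by
  have hD : (diagonal fun i => (d i : ℂ)).IsHermitian := by
    simp [IsHermitian, diagonal_conjTranspose]
  rw [vnEntropy_eq_sum_negMulLog_roots_charpoly hD, charpoly_diagonal, roots_prod]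
  · simp only [roots_X_sub_C, Multiset.bind_singleton, Multiset.map_map, Function.comp_def,
      Complex.ofReal_re]
    rfl
  · simp [Finset.prod_ne_zero_iff, X_sub_C_ne_zero]

theorem vnEntropy_sum_outer_of_orthogonal {ι : Type*} [Fintype ι] [DecidableEq ι]
    (u : ι → n → ℂ) (h : Pairwise fun i j => star (u i) ⬝ᵥ u j = 0) :
    vnEntropy (∑ i, outer (u i)) = ∑ i, negMulLog (star (u i) ⬝ᵥ u i).re := by
  have hgram : (of fun x i => u i x)ᴴ * of (fun x i => u i x)
      = diagonal fun i => ((star (u i) ⬝ᵥ u i).re : ℂ) := by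
    ext i j
    rcases eq_or_ne i j with rfl | hij
    · rw [diagonal_apply_eq, Complex.conj_eq_iff_re.mp (star_dotProduct (u i) (u i)).symm]
      simp [mul_apply, dotProduct]
    · rw [diagonal_apply_ne _ hij, ← h hij]
      simp [mul_apply, dotProduct]
  rw [sum_outer_eq_mul_conjTranspose, vnEntropy_mul_conjTranspose_comm, hgram,
    vnEntropy_diagonal_ofReal]

theorem vnEntropy_outer_add_outer {u v : n → ℂ} (huv : star u ⬝ᵥ v = 0) :
    vnEntropy (outer u + outer v)
      = negMulLog (star u ⬝ᵥ u).re + negMulLog (star v ⬝ᵥ v).re := by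
  have hvu : star v ⬝ᵥ u = 0 := by rw [star_dotProduct, huv, star_zero]
  have horth : Pairwise fun i j => star (![u, v] i) ⬝ᵥ ![u, v] j = 0 := by
    intro i j hij
    fin_cases i <;> fin_cases j <;> simp_all
  simpa using vnEntropy_sum_outer_of_orthogonal ![u, v] horth

end Spectral

section Bipartite

variable {α β : Type*} [Fintype α] [Fintype β]

theorem outer_kronecker_one_mulVec [DecidableEq β] (t : α → ℂ) (ψ : α × β → ℂ) :
    (outer t ⊗ₖ (1 : Matrix β β ℂ)) *ᵥ ψ = fun x => t x.1 * (star t ⬝ᵥ fun m => ψ (m, x.2)) := by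
  ext ⟨i, k⟩
  simp [mulVec, dotProduct, Fintype.sum_prod_type, outer, vecMulVec_apply, one_apply,
    Finset.mul_sum, mul_assoc]

theorem outer_kronecker_one_mul_outer_mul [DecidableEq β] (t : α → ℂ) (ψ : α × β → ℂ) :
    (outer t ⊗ₖ (1 : Matrix β β ℂ)) * outer ψ * (outer t ⊗ₖ (1 : Matrix β β ℂ))
      = outer fun x => t x.1 * (star t ⬝ᵥ fun m => ψ (m, x.2)) := by
  have hherm : (outer t ⊗ₖ (1 : Matrix β β ℂ))ᴴ = outer t ⊗ₖ 1 := by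
    simp [outer, conjTranspose_kronecker]
  rw [← outer_kronecker_one_mulVec, ← mul_outer_mul_conjTranspose, hherm]

theorem star_dotProduct_tensor (t t' : α → ℂ) (w w' : β → ℂ) :
    star (fun x : α × β => t x.1 * w x.2) ⬝ᵥ (fun x => t' x.1 * w' x.2)
      = (star t ⬝ᵥ t') * (star w ⬝ᵥ w') := by
  simp [dotProduct, Fintype.sum_prod_type, Finset.sum_mul_sum, mul_mul_mul_comm]

theorem star_dotProduct_self_smul_add_smul {b₁ b₂ : β → ℂ} (hb₁ : star b₁ ⬝ᵥ b₁ = 1)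
    (hb₂ : star b₂ ⬝ᵥ b₂ = 1) (hb₁₂ : star b₁ ⬝ᵥ b₂ = 0) (c₁ c₂ : ℂ) :
    star (c₁ • b₁ + c₂ • b₂) ⬝ᵥ (c₁ • b₁ + c₂ • b₂) = Complex.normSq c₁ + Complex.normSq c₂ := by
  have hb₂₁ : star b₂ ⬝ᵥ b₁ = 0 := by rw [star_dotProduct, hb₁₂, star_zero]
  simp [add_dotProduct, dotProduct_add, hb₁, hb₂, hb₁₂, hb₂₁, Complex.mul_conj]

theorem vnEntropy_pinch_schmidt [DecidableEq α] [DecidableEq β] {b₁ b₂ : β → ℂ}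
    (hb₁ : star b₁ ⬝ᵥ b₁ = 1) (hb₂ : star b₂ ⬝ᵥ b₂ = 1) (hb₁₂ : star b₁ ⬝ᵥ b₂ = 0)
    {t₁ t₂ : α → ℂ} (ht₁ : star t₁ ⬝ᵥ t₁ = 1) (ht₂ : star t₂ ⬝ᵥ t₂ = 1)
    (ht₁₂ : star t₁ ⬝ᵥ t₂ = 0) (l₁ l₂ : ℂ) (a₁ a₂ : α → ℂ) (ψ : α × β → ℂ)
    (hψ : ψ = fun x => l₁ * a₁ x.1 * b₁ x.2 + l₂ * a₂ x.1 * b₂ x.2) :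
    vnEntropy ((outer t₁ ⊗ₖ (1 : Matrix β β ℂ)) * outer ψ * (outer t₁ ⊗ₖ 1)
        + (outer t₂ ⊗ₖ (1 : Matrix β β ℂ)) * outer ψ * (outer t₂ ⊗ₖ 1))
      = negMulLog (Complex.normSq (l₁ * (star t₁ ⬝ᵥ a₁)) + Complex.normSq (l₂ * (star t₁ ⬝ᵥ a₂)))
        + negMulLog (Complex.normSq (l₁ * (star t₂ ⬝ᵥ a₁))
          + Complex.normSq (l₂ * (star t₂ ⬝ᵥ a₂))) := by
  have hcontract : ∀ (t : α → ℂ) (y : β), (star t ⬝ᵥ fun m => ψ (m, y))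
      = ((l₁ * (star t ⬝ᵥ a₁)) • b₁ + (l₂ * (star t ⬝ᵥ a₂)) • b₂) y := by
    intro t y
    simp only [hψ, dotProduct, Finset.mul_sum, Finset.sum_mul, ← Finset.sum_add_distrib, mul_add,
      Pi.add_apply, Pi.smul_apply, smul_eq_mul]
    exact Finset.sum_congr rfl fun m _ => by ring
  simp only [outer_kronecker_one_mul_outer_mul, hcontract]
  rw [vnEntropy_outer_add_outer (by rw [star_dotProduct_tensor, ht₁₂, zero_mul]),
    star_dotProduct_tensor, star_dotProduct_tensor, ht₁, ht₂, one_mul, one_mul,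
    star_dotProduct_self_smul_add_smul hb₁ hb₂ hb₁₂, star_dotProduct_self_smul_add_smul hb₁ hb₂ hb₁₂]
  simp

end Bipartite

theorem sum_normSq_dotProduct_of_orthonormal {n : Type*} [Fintype n] [DecidableEq n]
    {v : n → n → ℂ} (hv : ∀ i j, star (v i) ⬝ᵥ v j = if i = j then 1 else 0) (a : n → ℂ) :
    ∑ i, Complex.normSq (star (v i) ⬝ᵥ a) = (star a ⬝ᵥ a).re := by
  set M : Matrix n n ℂ := of fun i k => star (v i k)
  have hMM : Mᴴ * M = 1 := mul_eq_one_comm.mp <| by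
    ext i j
    simpa [M, mul_apply, dotProduct, one_apply] using hv i j
  have hnorm : star (M *ᵥ a) ⬝ᵥ (M *ᵥ a) = star a ⬝ᵥ a := by
    rw [star_mulVec, ← dotProduct_mulVec, mulVec_mulVec, hMM, one_mulVec]
  have hMa : M *ᵥ a = fun i => star (v i) ⬝ᵥ a := rfl
  rw [← hnorm, hMa]
  simp only [dotProduct, Pi.star_apply, Complex.star_def, ← Complex.normSq_eq_conj_mul_self,
    ← Complex.ofReal_sum, Complex.ofReal_re]

theorem normSq_dotProduct_add_normSq_dotProduct {x y : Fin 2 → ℂ} (hx : star x ⬝ᵥ x = 1)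
    (hy : star y ⬝ᵥ y = 1) (hxy : star x ⬝ᵥ y = 0) (a : Fin 2 → ℂ) :
    Complex.normSq (star x ⬝ᵥ a) + Complex.normSq (star y ⬝ᵥ a) = (star a ⬝ᵥ a).re := by
  have hyx : star y ⬝ᵥ x = 0 := by rw [star_dotProduct, hxy, star_zero]
  have hv : ∀ i j, star (![x, y] i) ⬝ᵥ ![x, y] j = if i = j then 1 else 0 := by
    intro i j
    fin_cases i <;> fin_cases j <;> simp [hx, hy, hxy, hyx]
  simpa using sum_normSq_dotProduct_of_orthonormal hv a

theorem normSq_star_dotProduct_comm {n : Type*} [Fintype n] (v w : n → ℂ) :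
    Complex.normSq (star v ⬝ᵥ w) = Complex.normSq (star w ⬝ᵥ v) := by
  rw [star_dotProduct, Complex.star_def, Complex.normSq_conj]

theorem binEnt_eq_binEntropy (p : ℝ) : binEnt p = binEntropy p := by
  rw [binEnt, binEntropy_eq_negMulLog_add_negMulLog_one_sub, negMulLog, negMulLog]
  ring

theorem binEntropy_le_binEntropy_mix {p s : ℝ} (hp : p ∈ Set.Icc (0 : ℝ) 1)
    (hs : s ∈ Set.Icc (0 : ℝ) 1) : binEntropy p ≤ binEntropy (s * p + (1 - s) * (1 - p)) := by
  have hp' : 1 - p ∈ Set.Icc (0 : ℝ) 1 := ⟨by linarith [hp.2], by linarith [hp.1]⟩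
  have h := strictConcave_binEntropy.concaveOn.2 hp hp' hs.1 (sub_nonneg.2 hs.2)
    (add_sub_cancel s 1)
  simp only [binEntropy_one_sub, smul_eq_mul] at h
  linarith

theorem binEntropy_le_negMulLog_add_negMulLog {a₁ a₂ t₁ t₂ : Fin 2 → ℂ}
    (ha₁ : star a₁ ⬝ᵥ a₁ = 1) (ha₂ : star a₂ ⬝ᵥ a₂ = 1) (ha₁₂ : star a₁ ⬝ᵥ a₂ = 0)
    (ht₁ : star t₁ ⬝ᵥ t₁ = 1) (ht₂ : star t₂ ⬝ᵥ t₂ = 1) (ht₁₂ : star t₁ ⬝ᵥ t₂ = 0)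
    {p : ℝ} (hp : p ∈ Set.Icc (0 : ℝ) 1) :
    binEntropy p ≤
      negMulLog (p * Complex.normSq (star t₁ ⬝ᵥ a₁) + (1 - p) * Complex.normSq (star t₁ ⬝ᵥ a₂))
        + negMulLog (p * Complex.normSq (star t₂ ⬝ᵥ a₁)
          + (1 - p) * Complex.normSq (star t₂ ⬝ᵥ a₂)) := by
  have hrow := normSq_dotProduct_add_normSq_dotProduct ha₁ ha₂ ha₁₂ t₁
  rw [normSq_star_dotProduct_comm a₁, normSq_star_dotProduct_comm a₂, ht₁, Complex.one_re]
    at hrow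
  have hcol₁ := normSq_dotProduct_add_normSq_dotProduct ht₁ ht₂ ht₁₂ a₁
  have hcol₂ := normSq_dotProduct_add_normSq_dotProduct ht₁ ht₂ ht₁₂ a₂
  rw [ha₁, Complex.one_re] at hcol₁
  rw [ha₂, Complex.one_re] at hcol₂
  set s := Complex.normSq (star t₁ ⬝ᵥ a₁)
  have hq₁ : p * s + (1 - p) * Complex.normSq (star t₁ ⬝ᵥ a₂) = s * p + (1 - s) * (1 - p) := by
    linear_combination (1 - p) * hrow
  have hq₂ : p * Complex.normSq (star t₂ ⬝ᵥ a₁) + (1 - p) * Complex.normSq (star t₂ ⬝ᵥ a₂)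
      = 1 - (s * p + (1 - s) * (1 - p)) := by
    linear_combination p * hcol₁ + (1 - p) * hcol₂ - (1 - p) * hrow
  rw [hq₁, hq₂, ← binEntropy_eq_negMulLog_add_negMulLog_one_sub]
  exact binEntropy_le_binEntropy_mix hp
    ⟨Complex.normSq_nonneg _, by linarith [Complex.normSq_nonneg (star t₁ ⬝ᵥ a₂)]⟩

/-- For a Schmidt-decomposed pure state on `ℂ² ⊗ H_B`, dephasing in any local
orthonormal basis `{|ta₁⟩,|ta₂⟩}` gives entropy at least `h(p)`: the Schmidt
basis measurement is optimal. -/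
theorem schmidt_dephasing_optimal {B : Type*} [Fintype B] [DecidableEq B]
    (a₁ a₂ : Fin 2 → ℂ) (b₁ b₂ : B → ℂ)
    (ha₁ : star a₁ ⬝ᵥ a₁ = 1) (ha₂ : star a₂ ⬝ᵥ a₂ = 1) (ha₁₂ : star a₁ ⬝ᵥ a₂ = 0)
    (hb₁ : star b₁ ⬝ᵥ b₁ = 1) (hb₂ : star b₂ ⬝ᵥ b₂ = 1) (hb₁₂ : star b₁ ⬝ᵥ b₂ = 0)
    (p : ℝ) (hp : p ∈ Set.Icc (0:ℝ) 1)
    (ψ : Fin 2 × B → ℂ)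
    (hψ : ψ = fun x => (Real.sqrt p : ℂ) * a₁ x.1 * b₁ x.2 +
      (Real.sqrt (1 - p) : ℂ) * a₂ x.1 * b₂ x.2)
    (ρ : Matrix (Fin 2 × B) (Fin 2 × B) ℂ) (hρ : ρ = outer ψ)
    (ta₁ ta₂ : Fin 2 → ℂ)
    (hta₁ : star ta₁ ⬝ᵥ ta₁ = 1) (hta₂ : star ta₂ ⬝ᵥ ta₂ = 1) (hta₁₂ : star ta₁ ⬝ᵥ ta₂ = 0)
    (Qt₁ Qt₂ : Matrix (Fin 2 × B) (Fin 2 × B) ℂ)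
    (hQt₁ : Qt₁ = outer ta₁ ⊗ₖ (1 : Matrix B B ℂ))
    (hQt₂ : Qt₂ = outer ta₂ ⊗ₖ (1 : Matrix B B ℂ)) :
    binEnt p ≤ vnEntropy (Qt₁ * ρ * Qt₁ + Qt₂ * ρ * Qt₂) := by
  subst hρ hQt₁ hQt₂
  rw [vnEntropy_pinch_schmidt hb₁ hb₂ hb₁₂ hta₁ hta₂ hta₁₂ _ _ a₁ a₂ ψ hψ]
  simp only [Complex.normSq_mul, Complex.normSq_ofReal, Real.mul_self_sqrt hp.1,
    Real.mul_self_sqrt (sub_nonneg.2 hp.2)]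
  rw [binEnt_eq_binEntropy]
  exact binEntropy_le_negMulLog_add_negMulLog ha₁ ha₂ ha₁₂ hta₁ hta₂ hta₁₂ hp
end

section
/- Lemma 1 specialized: if a density matrix ρ on H_A ⊗ H_B ⊗ H_X has the form ρ = ρ_l^{AB} ⊗ |θ_l⟩⟨θ_l|_X (support on a single symmetry eigenvalue), then for any dephasing Π with projectors Π_b^B ⊗ |x⟩⟨x|_X there is a symmetric dephasing P with projectors P_b^B ⊗ |θ_x⟩⟨θ_x|_X (taking P_b = Π_b) such that S(ρ || P(ρ)) ≤ S(ρ || Π(ρ)). Hence the minimum of the local disturbance over all such dephasings is attained on symmetric ones. -/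
open scoped Kronecker ComplexOrder Matrix

/-!
Both dephasings act factorwise on `ρ = ρₗ ⊗ |θₗ⟩⟨θₗ|`: they give `σ ⊗ |θₗ⟩⟨θₗ|` and
`σ ⊗ ∑ₓ pₓ |x⟩⟨x|` with the same `σ = Π_B(ρₗ)` and `pₓ = |⟨x|θₗ⟩|²`, so only the cross terms
`Tr ρ log(·)` differ. Writing `σ = U diag(s) U†` and `rᵢ = (U† ρₗ U)ᵢᵢ ≥ 0`, the matrix `σ ⊗ D`
is diagonalised by `U ⊗ W` whenever `D = W diag(p) W†` with `W` unitary, and the cross terms become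
`∑ᵢ rᵢ log sᵢ` and `∑ᵢ rᵢ ∑ₓ pₓ log (sᵢ pₓ)`; the latter is smaller since `log pₓ ≤ 0`
(with `log 0 = 0`, as in `matLog`).
-/

open Matrix Polynomial

lemma exists_polynomial_eval_ofReal_eq (f : ℝ → ℝ) (S : Finset ℝ) :
    ∃ q : ℂ[X], ∀ x ∈ S, q.eval (x : ℂ) = f x := by
  refine ⟨(Lagrange.interpolate S id f).map (algebraMap ℝ ℂ), fun x hx => ?_⟩
  rw [eval_map, ← Complex.coe_algebraMap, eval₂_at_apply]
  exact congrArg _ (Lagrange.eval_interpolate_at_node f (Set.injOn_id _) hx)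

lemma aeval_diagonal {m : Type*} [Fintype m] [DecidableEq m] (g : m → ℂ) (q : ℂ[X]) :
    aeval (diagonal g) q = diagonal fun i => q.eval (g i) := by
  simpa [aeval_pi_apply] using aeval_algHom_apply (diagonalAlgHom ℂ) g q

section MatLog

variable {n m : Type*} [Fintype n] [DecidableEq n] [Fintype m] [DecidableEq m]
  {V : Matrix n m ℂ}

lemma conj_pow_of_unitary (hV1 : Vᴴ * V = 1) (hV2 : V * Vᴴ = 1) (D : Matrix m m ℂ) (k : ℕ) :
    (V * D * Vᴴ) ^ k = V * D ^ k * Vᴴ := by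
  induction k with
  | zero => simpa using hV2.symm
  | succ k ih =>
    rw [pow_succ, ih, pow_succ]
    calc V * D ^ k * Vᴴ * (V * D * Vᴴ) = V * D ^ k * (Vᴴ * V) * D * Vᴴ := by
          simp only [Matrix.mul_assoc]
      _ = V * (D ^ k * D) * Vᴴ := by rw [hV1, Matrix.mul_one, Matrix.mul_assoc V]

lemma aeval_conj_of_unitary (hV1 : Vᴴ * V = 1) (hV2 : V * Vᴴ = 1) (D : Matrix m m ℂ)
    (q : ℂ[X]) : aeval (V * D * Vᴴ) q = V * aeval D q * Vᴴ := by
  induction q using Polynomial.induction_on' with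
  | add p q hp hq => rw [map_add, map_add, hp, hq, Matrix.mul_add, Matrix.add_mul]
  | monomial k a =>
    rw [aeval_monomial, aeval_monomial, conj_pow_of_unitary hV1 hV2,
      Algebra.algebraMap_eq_smul_one, Algebra.algebraMap_eq_smul_one, smul_one_mul, smul_one_mul,
      Matrix.mul_smul, Matrix.smul_mul]

lemma matLog_conj_diagonal (hV1 : Vᴴ * V = 1) (hV2 : V * Vᴴ = 1) (d : m → ℝ) :
    matLog (V * diagonal (fun i => (d i : ℂ)) * Vᴴ) =
      V * diagonal (fun i => (Real.log (d i) : ℂ)) * Vᴴ := by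
  set M := V * diagonal (fun i => (d i : ℂ)) * Vᴴ
  have hM : M.IsHermitian := by
    simp [M, IsHermitian, conjTranspose_mul, diagonal_conjTranspose, Matrix.mul_assoc,
      Pi.star_def]
  have hU := hM.eigenvectorUnitary.2
  have hspec : M = (hM.eigenvectorUnitary : Matrix n n ℂ) *
      diagonal (fun i => (hM.eigenvalues i : ℂ)) * (hM.eigenvectorUnitary : Matrix n n ℂ)ᴴ := by
    simpa [Unitary.conjStarAlgAut_apply, star_eq_conjTranspose, Function.comp_def] using
      hM.spectral_theorem
  -- `log` agrees with a polynomial on the eigenvalues of both decompositions of `M`.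
  obtain ⟨q, hq⟩ := exists_polynomial_eval_ofReal_eq Real.log
    (Finset.univ.image hM.eigenvalues ∪ Finset.univ.image d)
  rw [matLog, dif_pos hM, star_eq_conjTranspose,
    show (fun i => (Real.log (hM.eigenvalues i) : ℂ)) = fun i => q.eval (hM.eigenvalues i : ℂ)
      from funext fun i => (hq _ (by simp)).symm,
    show (fun i => (Real.log (d i) : ℂ)) = fun i => q.eval (d i : ℂ)
      from funext fun i => (hq _ (by simp)).symm,
    ← aeval_diagonal, ← aeval_diagonal, ← aeval_conj_of_unitary hV1 hV2,
    ← aeval_conj_of_unitary (mem_unitaryGroup_iff'.mp hU) (mem_unitaryGroup_iff.mp hU), ← hspec]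

end MatLog

lemma trace_mul_conj_diagonal {n m : Type*} [Fintype n] [Fintype m] [DecidableEq m]
    (ρ : Matrix n n ℂ) (V : Matrix n m ℂ) (g : m → ℂ) :
    (ρ * (V * diagonal g * Vᴴ)).trace = ∑ i, g i * (Vᴴ * ρ * V) i i := by
  rw [← Matrix.mul_assoc, Matrix.trace_mul_cycle, ← Matrix.mul_assoc, Matrix.trace]
  simp [Matrix.mul_diagonal, mul_comm]

lemma pinch_kronecker {n p β κ : Type*} [Fintype n] [DecidableEq n] [Fintype p] [DecidableEq p]
    [Fintype β] [Fintype κ] (P : β → Matrix n n ℂ) (R : κ → Matrix p p ℂ)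
    (M : Matrix n n ℂ) (N : Matrix p p ℂ) :
    pinch (fun bx : β × κ => P bx.1 ⊗ₖ R bx.2) (M ⊗ₖ N) = pinch P M ⊗ₖ pinch R N := by
  ext ⟨a, b⟩ ⟨c, d⟩
  simp only [pinch, ← mul_kronecker_mul, Fintype.sum_prod_type, Matrix.sum_apply,
    kroneckerMap_apply, Finset.sum_mul_sum]

lemma isHermitian_pinch {n β : Type*} [Fintype n] [DecidableEq n] [Fintype β]
    {P : β → Matrix n n ℂ} (hP : ∀ b, (P b).IsHermitian) {ρ : Matrix n n ℂ}
    (hρ : ρ.IsHermitian) : (pinch P ρ).IsHermitian := by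
  refine (conjTranspose_sum _ _).trans (Finset.sum_congr rfl fun b _ => ?_)
  rw [conjTranspose_mul, conjTranspose_mul, (hP b).eq, hρ.eq, Matrix.mul_assoc]

lemma outer_mul_outer_mul_outer {X : Type*} [Fintype X] (u v : X → ℂ) :
    outer u * outer v * outer u = (Complex.normSq (star u ⬝ᵥ v) : ℂ) • outer u := by
  rw [outer, outer, vecMulVec_mul_vecMulVec, vecMulVec_mul_vecMulVec, smul_dotProduct,
    smul_eq_mul, star_dotProduct v u, Complex.star_def, Complex.mul_conj, vecMulVec_smul]

lemma conj_diagonal_eq_sum_outer {X κ : Type*} [Fintype κ] [DecidableEq κ] (w : κ → X → ℂ)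
    (t : κ → ℂ) :
    (of w)ᵀ * diagonal t * (of w)ᵀᴴ = ∑ j, t j • outer (w j) := by
  ext x y
  simp [outer, mul_apply, Matrix.sum_apply, diagonal_apply, vecMulVec_apply, mul_assoc,
    mul_left_comm]

lemma pinch_outer {X κ : Type*} [Fintype X] [DecidableEq X] [Fintype κ] [DecidableEq κ]
    (w : κ → X → ℂ) (v : X → ℂ) :
    pinch (fun j => outer (w j)) (outer v) =
      (of w)ᵀ * diagonal (fun j => (Complex.normSq (star (w j) ⬝ᵥ v) : ℂ)) * (of w)ᵀᴴ := by
  rw [conj_diagonal_eq_sum_outer]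
  exact Finset.sum_congr rfl fun j _ => outer_mul_outer_mul_outer (w j) v

lemma conjTranspose_mul_self_of_orthonormal {X κ : Type*} [Fintype X] [DecidableEq κ]
    {w : κ → X → ℂ}
    (hw : ∀ j k, star (w j) ⬝ᵥ w k = if j = k then 1 else 0) : (of w)ᵀᴴ * (of w)ᵀ = 1 := by
  ext j k
  simpa [mul_apply, one_apply, dotProduct] using hw j k

lemma mul_conjTranspose_self_of_complete {X κ : Type*} [DecidableEq X] [Fintype κ]
    [DecidableEq κ] {w : κ → X → ℂ} (hwc : ∑ j, outer (w j) = 1) :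
    (of w)ᵀ * (of w)ᵀᴴ = 1 := by
  simpa [hwc] using conj_diagonal_eq_sum_outer w 1

lemma conj_outer_apply_self {X κ : Type*} [Fintype X] (w : κ → X → ℂ) (v : X → ℂ) (j : κ) :
    ((of w)ᵀᴴ * outer v * (of w)ᵀ) j j = Complex.normSq (star (w j) ⬝ᵥ v) := by
  rw [outer, mul_vecMulVec, vecMulVec_mul, vecMulVec_apply, ← Complex.mul_conj,
    ← Complex.star_def, ← star_dotProduct]
  simp [mulVec, vecMul, dotProduct, mul_comm]

lemma sum_normSq_dotProduct_of_complete {X κ : Type*} [Fintype X] [DecidableEq X] [Fintype κ]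
    [DecidableEq κ] {w : κ → X → ℂ} (hwc : ∑ j, outer (w j) = 1) (v : X → ℂ) :
    ∑ j, (Complex.normSq (star (w j) ⬝ᵥ v) : ℂ) = star v ⬝ᵥ v := by
  calc ∑ j, (Complex.normSq (star (w j) ⬝ᵥ v) : ℂ)
      = trace ((of w)ᵀᴴ * outer v * (of w)ᵀ) := by simp [trace, conj_outer_apply_self]
    _ = star v ⬝ᵥ v := by
      rw [trace_mul_cycle, mul_conjTranspose_self_of_complete hwc, Matrix.one_mul, outer,
        trace_vecMulVec, dotProduct_comm]

lemma Matrix.IsHermitian.exists_unitary_conj_diagonal {n : Type*} [Fintype n] [DecidableEq n]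
    {A : Matrix n n ℂ} (hA : A.IsHermitian) :
    ∃ (U : Matrix n n ℂ) (s : n → ℝ), Uᴴ * U = 1 ∧ U * Uᴴ = 1 ∧
      A = U * diagonal (fun i => (s i : ℂ)) * Uᴴ := by
  have hU := hA.eigenvectorUnitary.2
  refine ⟨_, hA.eigenvalues, mem_unitaryGroup_iff'.mp hU, mem_unitaryGroup_iff.mp hU, ?_⟩
  simpa [Unitary.conjStarAlgAut_apply, star_eq_conjTranspose, Function.comp_def] using
    hA.spectral_theorem

lemma trace_kronecker_mul_matLog_kronecker {n n' p p' : Type*} [Fintype n] [DecidableEq n]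
    [Fintype n'] [DecidableEq n'] [Fintype p] [DecidableEq p] [Fintype p'] [DecidableEq p']
    {U : Matrix n n' ℂ} {W : Matrix p p' ℂ} (hU1 : Uᴴ * U = 1) (hU2 : U * Uᴴ = 1)
    (hW1 : Wᴴ * W = 1) (hW2 : W * Wᴴ = 1) (s : n' → ℝ) (t : p' → ℝ)
    (M : Matrix n n ℂ) (N : Matrix p p ℂ) :
    (M ⊗ₖ N * matLog ((U * diagonal (fun i => (s i : ℂ)) * Uᴴ) ⊗ₖ
        (W * diagonal (fun j => (t j : ℂ)) * Wᴴ))).trace =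
      ∑ i, ∑ j, (Real.log (s i * t j) : ℂ) * ((Uᴴ * M * U) i i * (Wᴴ * N * W) j j) := by
  have h1 : (U ⊗ₖ W)ᴴ * (U ⊗ₖ W) = 1 := by
    rw [conjTranspose_kronecker, ← mul_kronecker_mul, hU1, hW1, one_kronecker_one]
  have h2 : (U ⊗ₖ W) * (U ⊗ₖ W)ᴴ = 1 := by
    rw [conjTranspose_kronecker, ← mul_kronecker_mul, hU2, hW2, one_kronecker_one]
  have hdiag : diagonal (fun i => (s i : ℂ)) ⊗ₖ diagonal (fun j => (t j : ℂ)) =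
      diagonal fun ij : n' × p' => ((s ij.1 * t ij.2 : ℝ) : ℂ) := by
    simp [diagonal_kronecker_diagonal]
  rw [mul_kronecker_mul, mul_kronecker_mul, hdiag, ← conjTranspose_kronecker,
    matLog_conj_diagonal h1 h2, trace_mul_conj_diagonal, Fintype.sum_prod_type,
    conjTranspose_kronecker, ← mul_kronecker_mul, ← mul_kronecker_mul]
  rfl

lemma re_trace_kronecker_outer_mul_matLog_pinch {n n' X κ : Type*} [Fintype n] [DecidableEq n]
    [Fintype n'] [DecidableEq n'] [Fintype X] [DecidableEq X] [Fintype κ] [DecidableEq κ]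
    {U : Matrix n n' ℂ} (hU1 : Uᴴ * U = 1) (hU2 : U * Uᴴ = 1) (s : n' → ℝ)
    {w : κ → X → ℂ} (hw : ∀ j k, star (w j) ⬝ᵥ w k = if j = k then 1 else 0)
    (hwc : ∑ j, outer (w j) = 1) (M : Matrix n n ℂ) (v : X → ℂ) :
    ((M ⊗ₖ outer v) * matLog ((U * diagonal (fun i => (s i : ℂ)) * Uᴴ) ⊗ₖ
        pinch (fun j => outer (w j)) (outer v))).trace.re =
      ∑ i, ((Uᴴ * M * U) i i).re * ∑ j, Complex.normSq (star (w j) ⬝ᵥ v) *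
        Real.log (s i * Complex.normSq (star (w j) ⬝ᵥ v)) := by
  rw [pinch_outer, trace_kronecker_mul_matLog_kronecker hU1 hU2
    (conjTranspose_mul_self_of_orthonormal hw) (mul_conjTranspose_self_of_complete hwc)]
  simp only [conj_outer_apply_self, Complex.re_sum, Finset.mul_sum]
  refine Finset.sum_congr rfl fun i _ => Finset.sum_congr rfl fun j _ => ?_
  simp [Complex.mul_re]
  ring

lemma sum_mul_log_mul_le_log {κ : Type*} [Fintype κ] {t : κ → ℝ} (ht0 : ∀ j, 0 ≤ t j)
    (ht1 : ∑ j, t j = 1) (s : ℝ) : ∑ j, t j * Real.log (s * t j) ≤ Real.log s := by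
  calc ∑ j, t j * Real.log (s * t j) ≤ ∑ j, t j * Real.log s := by
        refine Finset.sum_le_sum fun j _ => ?_
        rcases (ht0 j).eq_or_lt with htj | htj
        · simp [← htj]
        rcases eq_or_ne s 0 with rfl | hs
        · simp
        have htj1 : t j ≤ 1 := ht1 ▸ Finset.single_le_sum (fun k _ => ht0 k) (Finset.mem_univ j)
        rw [Real.log_mul hs htj.ne']
        nlinarith [Real.log_nonpos (ht0 j) htj1]
    _ = Real.log s := by rw [← Finset.sum_mul, ht1, one_mul]

/-- Lemma 1 specialized: for `ρ = ρₗ^{AB} ⊗ |θₗ⟩⟨θₗ|` (support on a single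
symmetry eigenvalue) and any dephasing with projectors `Π_b ⊗ |x⟩⟨x|`, the
symmetric dephasing with the same `Π_b` and the `θ`-basis creates a smaller
disturbance. -/
theorem symmetric_dephasing_optimal {A B X ι β : Type*}
    [Fintype A] [DecidableEq A] [Fintype B] [DecidableEq B]
    [Fintype X] [DecidableEq X] [Fintype ι] [DecidableEq ι]
    [Fintype β] [DecidableEq β]
    (θ : ι → (X → ℂ)) (hθ : ∀ j k, star (θ j) ⬝ᵥ θ k = if j = k then 1 else 0)
    (hθc : ∑ j, outer (θ j) = 1)
    (xb : X → (X → ℂ)) (hxb : ∀ j k, star (xb j) ⬝ᵥ xb k = if j = k then 1 else 0)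
    (hxbc : ∑ j, outer (xb j) = 1)
    (Qb : β → Matrix B B ℂ) (hQb : IsProjFamily Qb)
    (l : ι) (ρl : Matrix (A × B) (A × B) ℂ) (hρl : IsDensity ρl)
    (ρ : Matrix ((A × B) × X) ((A × B) × X) ℂ)
    (hρ : ρ = ρl ⊗ₖ outer (θ l)) :
    relEntropy ρ
        (pinch (fun bx : β × ι =>
          ((1 : Matrix A A ℂ) ⊗ₖ Qb bx.1) ⊗ₖ outer (θ bx.2)) ρ) ≤
      relEntropy ρ
        (pinch (fun bx : β × X =>
          ((1 : Matrix A A ℂ) ⊗ₖ Qb bx.1) ⊗ₖ outer (xb bx.2)) ρ) := by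
  subst hρ
  have hσ : (pinch (fun b => (1 : Matrix A A ℂ) ⊗ₖ Qb b) ρl).IsHermitian :=
    isHermitian_pinch (fun b => by simp [IsHermitian, conjTranspose_kronecker, (hQb.1 b).eq])
      hρl.1.1
  obtain ⟨U, s, hU1, hU2, hσU⟩ := hσ.exists_unitary_conj_diagonal
  have hr (i : A × B) : 0 ≤ ((Uᴴ * ρl * U) i i).re :=
    (Complex.nonneg_iff.mp (hρl.1.conjTranspose_mul_mul_same U).diag_nonneg).1
  have hθl (j : ι) : Complex.normSq (star (θ j) ⬝ᵥ θ l) = if j = l then 1 else 0 := by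
    rw [hθ]; split_ifs <;> simp
  have hxbl : ∑ x, Complex.normSq (star (xb x) ⬝ᵥ θ l) = 1 := by
    have h := sum_normSq_dotProduct_of_complete hxbc (θ l)
    rw [hθ l l, if_pos rfl] at h
    exact_mod_cast h
  simp only [relEntropy, Complex.sub_re]
  rw [pinch_kronecker (fun b => (1 : Matrix A A ℂ) ⊗ₖ Qb b) (fun j => outer (θ j)),
    pinch_kronecker (fun b => (1 : Matrix A A ℂ) ⊗ₖ Qb b) (fun x => outer (xb x)), hσU,
    sub_le_sub_iff_left, re_trace_kronecker_outer_mul_matLog_pinch hU1 hU2 s hxb hxbc,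
    re_trace_kronecker_outer_mul_matLog_pinch hU1 hU2 s hθ hθc]
  refine Finset.sum_le_sum fun i _ => mul_le_mul_of_nonneg_left ?_ (hr i)
  simpa [hθl] using sum_mul_log_mul_le_log (fun x => Complex.normSq_nonneg _) hxbl (s i)
end
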